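/- Let G be a graph and suppose T is a HIST of a graph G' formed from G by attaching a pendant vertex z' to each z ∈ V(G) − {x,y}. Then every such pendant vertex z' is a leaf of T, its neighbor z has degree at least 3 in T, and T restricted to V(G) is a path between x and y. -/

import Mathlib

/-- The graph `G'` obtained from `G` by adding, for each vertex `z ∈ V(G) − {x,y}`, a new
pendant vertex `z'` adjacent only to `z`. -/
def pendantExt {V : Type*} (G : SimpleGraph V) (x y : V) :
    SimpleGraph (V ⊕ {z : V // z ≠ x ∧ z ≠ y}) :=
  SimpleGraph.fromRel (fun a b =>
    match a, b with
    | Sum.inl u, Sum.inl v => G.Adj u v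
    | Sum.inl u, Sum.inr z => u = z.1
    | _, _ => False)

/-!
A pendant vertex `z'` can only be adjacent to `z`, so it is a leaf of `T`. If `z` were a leaf
too, `{z, z'}` would be a component of `T`; since `z` does not have degree 2, it has degree at
least 3. Deleting the pendant leaves keeps `T` a tree `T'` on `V(G)`, in which every vertex other
than `x, y` has degree at least 2. As `∑ deg = 2(|V| - 1)` in a tree, `x` and `y` are then its
only leaves and all other degrees are 2, so the `x`–`y` path of `T'` is closed under adjacency,
hence Hamiltonian, and it uses all `|V| - 1` edges of `T'`.
-/

namespace SimpleGraph

variable {V : Type*} {G : SimpleGraph V}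

lemma ncard_neighborSet_eq_degree (v : V) [Fintype (G.neighborSet v)] :
    (G.neighborSet v).ncard = G.degree v := by
  rw [Set.ncard_eq_toFinset_card', Set.toFinset_card, card_neighborSet_eq_degree]

lemma Walk.mem_of_adj_closed {S : Set V} (hS : ∀ v ∈ S, ∀ w, G.Adj v w → w ∈ S)
    {u v : V} (p : G.Walk u v) (hu : u ∈ S) : v ∈ S := by
  induction p with
  | nil => exact hu
  | cons h _ ih => exact ih (hS _ hu _ h)

lemma Walk.IsPath.ncard_neighborSet_toSubgraph [DecidableEq V] {u v w : V} {p : G.Walk u v}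
    (hp : p.IsPath) (huv : u ≠ v) (hw : w ∈ p.support) :
    (p.toSubgraph.neighborSet w).ncard = if w = u ∨ w = v then 1 else 2 := by
  have hnil : ¬p.Nil := Walk.not_nil_of_ne huv
  obtain ⟨n, rfl, hn⟩ := Walk.mem_support_iff_exists_getVert.mp hw
  simp only [hp.getVert_eq_start_iff hn, hp.getVert_eq_end_iff hn]
  rcases Nat.eq_zero_or_pos n with rfl | hn0
  · simp [hp.neighborSet_toSubgraph_startpoint hnil]
  rcases hn.eq_or_lt with rfl | hlt
  · simp [hp.neighborSet_toSubgraph_endpoint hnil]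
  rw [hp.ncard_neighborSet_toSubgraph_internal_eq_two hn0.ne' hlt, if_neg (by omega)]

variable [Fintype V] [DecidableEq V]

lemma IsTree.degree_eq_of_two_le_degree [DecidableRel G.Adj] (hG : G.IsTree) {x y : V}
    (hxy : x ≠ y) (h : ∀ v, v ≠ x → v ≠ y → 2 ≤ G.degree v) (v : V) :
    G.degree v = if v = x ∨ v = y then 1 else 2 := by
  have : Nontrivial V := ⟨x, y, hxy⟩
  have hle : ∀ v, (if v = x ∨ v = y then 1 else 2) ≤ G.degree v := by
    intro v
    split_ifs with hv
    · exact hG.connected.preconnected.degree_pos_of_nontrivial v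
    · exact h v (fun hx => hv (.inl hx)) (fun hy => hv (.inr hy))
  have hsum : ∑ v, (if v = x ∨ v = y then 1 else 2) = ∑ v, G.degree v := by
    have hedges := hG.card_edgeFinset
    have hcompl := Finset.card_filter_add_card_filter_not
      (s := Finset.univ) (fun v : V => v = x ∨ v = y)
    have hpair : (Finset.univ.filter fun v : V => v = x ∨ v = y) = {x, y} := by
      ext; simp
    rw [hpair, Finset.card_pair hxy, Finset.card_univ] at hcompl
    rw [Finset.sum_ite, sum_degrees_eq_twice_card_edges, hpair]
    simp only [Finset.sum_const, smul_eq_mul, mul_one, Finset.card_pair hxy]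
    omega
  exact ((Finset.sum_eq_sum_iff_of_le fun v _ => hle v).mp hsum v (Finset.mem_univ v)).symm

lemma IsTree.mem_edgeSet_iff_of_isHamiltonian (hG : G.IsTree) {u v : V} {p : G.Walk u v}
    (hp : p.IsHamiltonian) (e : Sym2 V) : e ∈ G.edgeSet ↔ e ∈ p.edges := by
  classical
  have hsub : p.edges.toFinset ⊆ G.edgeFinset := fun e he =>
    mem_edgeFinset.mpr (p.edges_subset_edgeSet (List.mem_toFinset.mp he))
  have heq : p.edges.toFinset = G.edgeFinset := by
    refine Finset.eq_of_subset_of_card_le hsub ?_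
    rw [List.toFinset_card_of_nodup hp.isPath.edges_nodup, Walk.length_edges, hp.length_eq]
    have := hG.card_edgeFinset
    omega
  rw [← mem_edgeFinset, ← heq, List.mem_toFinset]

theorem IsTree.exists_isHamiltonian_of_two_le_degree [DecidableRel G.Adj] (hG : G.IsTree)
    {x y : V} (hxy : x ≠ y) (h : ∀ v, v ≠ x → v ≠ y → 2 ≤ G.degree v) :
    ∃ p : G.Walk x y, p.IsHamiltonian ∧ ∀ e, e ∈ G.edgeSet ↔ e ∈ p.edges := by
  classical
  obtain ⟨p, hp⟩ := hG.connected.exists_isPath x y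
  have hclosed : ∀ w ∈ p.support, ∀ w', G.Adj w w' → w' ∈ p.support := by
    intro w hw w' hadj
    have hN : p.toSubgraph.neighborSet w = G.neighborSet w := by
      refine Set.eq_of_subset_of_ncard_le (p.toSubgraph.neighborSet_subset w) ?_ (Set.toFinite _)
      rw [ncard_neighborSet_eq_degree, hG.degree_eq_of_two_le_degree hxy h,
        hp.ncard_neighborSet_toSubgraph hxy hw]
    have hadj' : w' ∈ p.toSubgraph.neighborSet w := hN ▸ hadj
    exact p.mem_verts_toSubgraph.mp (p.toSubgraph.edge_vert hadj'.symm)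
  have hham : p.IsHamiltonian := hp.isHamiltonian_of_mem fun w =>
    (hG.connected.preconnected x w).elim fun q => q.mem_of_adj_closed hclosed p.start_mem_support
  exact ⟨p, hham, hG.mem_edgeSet_iff_of_isHamiltonian hham⟩

end SimpleGraph

open SimpleGraph

section PendantExt

variable {V : Type*} {G : SimpleGraph V} {x y : V}

lemma pendantExt_adj_inr {a : V ⊕ {z : V // z ≠ x ∧ z ≠ y}} {z : {z : V // z ≠ x ∧ z ≠ y}} :
    (pendantExt G x y).Adj a (Sum.inr z) ↔ a = Sum.inl z.1 := by
  cases a <;> simp [pendantExt, eq_comm]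

variable {T : SimpleGraph (V ⊕ {z : V // z ≠ x ∧ z ≠ y})}

lemma adj_inr_iff_of_le_pendantExt (hle : T ≤ pendantExt G x y) (hT : T.Preconnected)
    (z : {z : V // z ≠ x ∧ z ≠ y}) (a : V ⊕ {z : V // z ≠ x ∧ z ≠ y}) :
    T.Adj (Sum.inr z) a ↔ a = Sum.inl z.1 := by
  refine ⟨fun h => pendantExt_adj_inr.mp (hle h.symm), ?_⟩
  rintro rfl
  obtain ⟨p⟩ := hT (Sum.inr z) (Sum.inl z.1)
  have hsnd := p.adj_snd (Walk.not_nil_of_ne Sum.inr_ne_inl)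
  rwa [pendantExt_adj_inr.mp (hle hsnd.symm)] at hsnd

lemma neighborSet_inr_eq_of_le_pendantExt (hle : T ≤ pendantExt G x y) (hT : T.Preconnected)
    (z : {z : V // z ≠ x ∧ z ≠ y}) : T.neighborSet (Sum.inr z) = {Sum.inl z.1} :=
  Set.ext (adj_inr_iff_of_le_pendantExt hle hT z)

lemma three_le_ncard_neighborSet_inl_of_le_pendantExt [Finite V] (hle : T ≤ pendantExt G x y)
    (hT : T.Preconnected) (z : {z : V // z ≠ x ∧ z ≠ y})
    (hz : (T.neighborSet (Sum.inl z.1)).ncard ≠ 2) : 3 ≤ (T.neighborSet (Sum.inl z.1)).ncard := by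
  have hmem : Sum.inr z ∈ T.neighborSet (Sum.inl z.1) :=
    ((adj_inr_iff_of_le_pendantExt hle hT z _).mpr rfl).symm
  have hpos : (T.neighborSet (Sum.inl z.1)).ncard ≠ 0 :=
    ((Set.ncard_pos (Set.toFinite _)).mpr ⟨_, hmem⟩).ne'
  have hone : (T.neighborSet (Sum.inl z.1)).ncard ≠ 1 := by
    intro h1
    obtain ⟨a, ha⟩ := Set.ncard_eq_one.mp h1
    rw [ha, Set.mem_singleton_iff] at hmem
    subst hmem
    have hclosed : ∀ v ∈ ({Sum.inl z.1, Sum.inr z} : Set (V ⊕ {z : V // z ≠ x ∧ z ≠ y})),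
        ∀ w, T.Adj v w → w ∈ ({Sum.inl z.1, Sum.inr z} : Set _) := by
      rintro v (rfl | rfl) w hw
      · exact Or.inr (ha ▸ hw : w ∈ ({Sum.inr z} : Set _))
      · exact Or.inl ((adj_inr_iff_of_le_pendantExt hle hT z w).mp hw)
    obtain ⟨p⟩ := hT (Sum.inl z.1) (Sum.inl x)
    rcases p.mem_of_adj_closed hclosed (Or.inl rfl) with h | h
    · exact z.2.1 (Sum.inl_injective h).symm
    · exact Sum.inl_ne_inr h
  omega

lemma isTree_comap_inl_of_le_pendantExt (hle : T ≤ pendantExt G x y) (hT : T.IsTree) :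
    (T.comap Sum.inl).IsTree := by
  refine ⟨?_, hT.isAcyclic.of_comap Function.Embedding.inl⟩
  have : Nonempty V := ⟨x⟩
  rw [connected_iff]
  refine ⟨?_, inferInstance⟩
  have hleaves : ∀ a ∉ Set.range Sum.inl, (T.neighborSet a).Subsingleton := by
    rintro (v | z) ha
    · exact absurd ⟨v, rfl⟩ ha
    · exact Set.subsingleton_singleton.anti fun a h => pendantExt_adj_inr.mp (hle h.symm)
  exact (Embedding.comap Function.Embedding.inl T).isoInduceRange.preconnected_iff.mpr
    (hT.connected.preconnected.induce_of_degree_eq_one hleaves)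

lemma ncard_neighborSet_inl_le_of_le_pendantExt [Finite V] (hle : T ≤ pendantExt G x y) {v : V}
    (hv : v ≠ x ∧ v ≠ y) :
    (T.neighborSet (Sum.inl v)).ncard ≤ ((T.comap Sum.inl).neighborSet v).ncard + 1 := by
  have hsub : T.neighborSet (Sum.inl v) ⊆
      insert (Sum.inr ⟨v, hv⟩) (Sum.inl '' (T.comap Sum.inl).neighborSet v) := by
    rintro (u | z) h
    · exact Or.inr ⟨u, h, rfl⟩
    · have hz := Sum.inl_injective (pendantExt_adj_inr.mp (hle h))
      exact Or.inl (congrArg Sum.inr (Subtype.ext hz.symm))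
  calc (T.neighborSet (Sum.inl v)).ncard
      ≤ (insert (Sum.inr ⟨v, hv⟩) (Sum.inl '' (T.comap Sum.inl).neighborSet v)).ncard :=
        Set.ncard_le_ncard hsub (Set.toFinite _)
    _ ≤ (Sum.inl '' (T.comap Sum.inl).neighborSet v).ncard + 1 := Set.ncard_insert_le _ _
    _ = ((T.comap Sum.inl).neighborSet v).ncard + 1 := by
        rw [Set.ncard_image_of_injective _ Sum.inl_injective]

end PendantExt

/-- If `T` is a HIST of the graph `G'` formed from `G` by attaching a pendant vertex `z'`
to each `z ∈ V(G) − {x,y}`, then every pendant vertex is a leaf of `T`, its neighbor has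
degree at least 3 in `T`, and `T` restricted to `V(G)` is a (Hamiltonian) path between
`x` and `y`. -/
theorem stmt_13 {V : Type*} [Fintype V] [DecidableEq V] (G : SimpleGraph V)
    (x y : V) (hxy : x ≠ y)
    (T : SimpleGraph (V ⊕ {z : V // z ≠ x ∧ z ≠ y}))
    (hle : T ≤ pendantExt G x y) (hTree : T.IsTree)
    (hHIST : ∀ v, (T.neighborSet v).ncard ≠ 2) :
    (∀ z : {z : V // z ≠ x ∧ z ≠ y},
        (T.neighborSet (Sum.inr z)).ncard = 1 ∧
        3 ≤ (T.neighborSet (Sum.inl z.1)).ncard) ∧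
      ∃ p : (SimpleGraph.comap Sum.inl T).Walk x y, p.IsHamiltonian ∧
        ∀ e, e ∈ (SimpleGraph.comap Sum.inl T).edgeSet ↔ e ∈ p.edges := by
  classical
  have hT := hTree.connected.preconnected
  have hdeg3 := fun z => three_le_ncard_neighborSet_inl_of_le_pendantExt hle hT z (hHIST _)
  refine ⟨fun z => ⟨?_, hdeg3 z⟩, ?_⟩
  · rw [neighborSet_inr_eq_of_le_pendantExt hle hT z, Set.ncard_singleton]
  refine (isTree_comap_inl_of_le_pendantExt hle hTree).exists_isHamiltonian_of_two_le_degree hxy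
    fun v hvx hvy => ?_
  have hdrop := ncard_neighborSet_inl_le_of_le_pendantExt hle ⟨hvx, hvy⟩
  have hdeg3v : 3 ≤ (T.neighborSet (Sum.inl v)).ncard := hdeg3 ⟨v, hvx, hvy⟩
  rw [← ncard_neighborSet_eq_degree]
  omega
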